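/- Let λ ∈ (0,2], ε > 0, and suppose T ≥ log(6/(ελ))/λ, N ≥ 6T/ε, and K ≥ max(6T, log(6T/ε)) are positive integers (T a positive real suffices). Then |1/λ - (T/N)·∑_{j=1}^{N} ∑_{k=0}^{K-1} P_{jT/N}(k)·(1-λ)^k| ≤ ε/2. -/

import Mathlib

/-- The Poisson probability mass function with parameter `s`. -/
noncomputable def poissonPMF (s : ℝ) (k : ℕ) : ℝ := Real.exp (-s) * s ^ k / (Nat.factorial k)

/-!
The Poisson weights are the Taylor coefficients of `e^{-s} e^{s(1-λ)} = e^{-λs}` in powers of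
`1 - λ`, so for `|1 - λ| ≤ 1` the inner sum truncated at `K` is within the exponential tail
`s^K/K! ≤ 2^{-K}` of `e^{-λs}` as soon as `K ≥ 6s`. The outer sum is then a right Riemann sum of
`∫₀^T e^{-λt} dt`, which lies within the mesh `T/N` of `(1 - e^{-λT})/λ`. Each of the three errors
`T/N`, `e^{-λT}/λ` and `T 2^{-K}` is at most `ε/6`.
-/

open Finset Real

theorem hasSum_pow_div_factorial_exp (y : ℝ) :
    HasSum (fun n : ℕ => y ^ n / n.factorial) (exp y) := by
  rw [exp_eq_exp_ℝ]
  exact NormedSpace.expSeries_div_hasSum_exp y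

theorem hasSum_exp_sub_sum_range (y : ℝ) (K : ℕ) :
    HasSum (fun n : ℕ => y ^ (n + K) / (n + K).factorial)
      (exp y - ∑ k ∈ range K, y ^ k / k.factorial) :=
  (hasSum_nat_add_iff' K).2 (hasSum_pow_div_factorial_exp y)

theorem abs_exp_sub_sum_range_le {y s : ℝ} (hy : |y| ≤ s) (K : ℕ) :
    |exp y - ∑ k ∈ range K, y ^ k / k.factorial| ≤ s ^ K / K.factorial * exp s := by
  have hs : 0 ≤ s := (abs_nonneg y).trans hy
  refine (hasSum_exp_sub_sum_range y K).norm_le_of_bounded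
    ((hasSum_pow_div_factorial_exp s).mul_left (s ^ K / K.factorial)) fun n => ?_
  have hfact : (K.factorial * n.factorial : ℝ) ≤ (n + K).factorial := by
    rw [add_comm]
    exact_mod_cast Nat.le_of_dvd (Nat.factorial_pos _)
      (Nat.factorial_mul_factorial_dvd_factorial_add K n)
  calc ‖y ^ (n + K) / (n + K).factorial‖ = |y| ^ (n + K) / (n + K).factorial := by
        simp
    _ ≤ s ^ (n + K) / (K.factorial * n.factorial) := by gcongr
    _ = s ^ K / K.factorial * (s ^ n / n.factorial) := by rw [pow_add]; field_simp

theorem abs_exp_neg_mul_sub_sum_poissonPMF_le {lam s : ℝ} (hlam : 0 ≤ lam) (hlam2 : lam ≤ 2)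
    (hs : 0 ≤ s) (K : ℕ) :
    |exp (-(lam * s)) - ∑ k ∈ range K, poissonPMF s k * (1 - lam) ^ k| ≤ s ^ K / K.factorial := by
  have hy : |s * (1 - lam)| ≤ s := by
    rw [abs_mul, abs_of_nonneg hs]
    exact mul_le_of_le_one_right hs (abs_le.2 ⟨by linarith, by linarith⟩)
  have hfactor : exp (-(lam * s)) - ∑ k ∈ range K, poissonPMF s k * (1 - lam) ^ k
      = exp (-s) * (exp (s * (1 - lam)) - ∑ k ∈ range K, (s * (1 - lam)) ^ k / k.factorial) := by
    rw [mul_sub, ← exp_add, mul_sum]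
    congr 1
    · ring_nf
    · refine sum_congr rfl fun k _ => ?_
      rw [poissonPMF, mul_pow]
      ring
  calc _ = exp (-s) * |exp (s * (1 - lam)) - ∑ k ∈ range K, (s * (1 - lam)) ^ k / k.factorial| := by
        rw [hfactor, abs_mul, abs_of_pos (exp_pos _)]
    _ ≤ exp (-s) * (s ^ K / K.factorial * exp s) := by
        gcongr; exact abs_exp_sub_sum_range_le hy K
    _ = s ^ K / K.factorial := by rw [mul_left_comm, ← exp_add]; simp

theorem pow_div_factorial_le_half_pow {s : ℝ} {K : ℕ} (hs : 0 ≤ s) (hsK : 6 * s ≤ K) :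
    s ^ K / K.factorial ≤ (1 / 2) ^ K :=
  calc s ^ K / K.factorial ≤ ((K : ℝ) / 6) ^ K / K.factorial := by gcongr; linarith
    _ = (K : ℝ) ^ K / K.factorial * (1 / 6) ^ K := by rw [div_pow, one_div_pow]; ring
    _ ≤ exp K * (1 / 6) ^ K := by gcongr; exact pow_div_factorial_le_exp _ (Nat.cast_nonneg K) K
    _ = (exp 1 / 6) ^ K := by rw [← exp_one_pow, ← mul_pow, mul_one_div]
    _ ≤ (1 / 2) ^ K := pow_le_pow_left₀ (by positivity) (by linarith [exp_one_lt_three]) K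

theorem abs_inv_sub_riemann_sum_exp_le {lam h : ℝ} (hlam : 0 < lam) (hh : 0 < h) (N : ℕ) :
    |1 / lam - h * ∑ j ∈ Icc 1 N, exp (-(lam * (j * h)))|
      ≤ h + exp (-(lam * (N * h))) / lam := by
  set r := exp (-(lam * h)) with hr
  have hr0 : 0 < r := exp_pos _
  have hr1 : r < 1 := exp_lt_one_iff.2 (by nlinarith)
  have hpow (n : ℕ) : exp (-(lam * (n * h))) = r ^ n := by rw [← exp_nat_mul]; ring_nf
  have hgeom : ∑ j ∈ Icc 1 N, r ^ j = r * (1 - r ^ N) / (1 - r) := by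
    rw [← Ico_add_one_right_eq_Icc, geom_sum_Ico' hr1.ne (by omega)]; ring
  -- `1 - λh ≤ r ≤ 1/(1 + λh)` squeezes `A` into `[1/λ - h, 1/λ]`.
  set A := h * r / (1 - r) with hA
  have hA_le : A ≤ 1 / lam := by
    have hmul : r * exp (lam * h) = 1 := by rw [hr, ← exp_add]; simp
    rw [hA, div_le_div_iff₀ (by linarith) hlam]
    nlinarith [add_one_le_exp (lam * h)]
  have hA_ge : 1 / lam - h ≤ A := by
    have := one_sub_le_exp_neg (lam * h)
    rw [hA, le_div_iff₀ (by linarith), sub_mul, div_mul_eq_mul_div, one_mul,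
      div_sub' hlam.ne', div_le_iff₀ hlam]
    nlinarith
  have hrN0 : 0 ≤ r ^ N := by positivity
  have hArN0 : 0 ≤ A * r ^ N := mul_nonneg (div_nonneg (by positivity) (by linarith)) hrN0
  have hArN : A * r ^ N ≤ r ^ N / lam := by
    rw [mul_comm, div_eq_mul_one_div]; exact mul_le_mul_of_nonneg_left hA_le hrN0
  rw [sum_congr rfl fun j _ => hpow j, hpow, hgeom,
    show h * (r * (1 - r ^ N) / (1 - r)) = A - A * r ^ N by ring, abs_le]
  constructor <;> linarith

theorem abs_riemann_sum_exp_sub_poisson_le {lam h : ℝ} {N K : ℕ} (hlam : 0 ≤ lam)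
    (hlam2 : lam ≤ 2) (hh : 0 ≤ h) (hK : 6 * (N * h) ≤ K) :
    |h * ∑ j ∈ Icc 1 N, exp (-(lam * (j * h)))
        - h * ∑ j ∈ Icc 1 N, ∑ k ∈ range K, poissonPMF (j * h) k * (1 - lam) ^ k|
      ≤ N * h * (1 / 2) ^ K := by
  rw [← mul_sub, ← sum_sub_distrib, abs_mul, abs_of_nonneg hh]
  calc _ ≤ h * ∑ j ∈ Icc 1 N, (1 / 2 : ℝ) ^ K := by
        gcongr
        refine (abs_sum_le_sum_abs _ _).trans (sum_le_sum fun j hj => ?_)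
        have hjN : (j : ℝ) * h ≤ N * h := by gcongr; exact_mod_cast (mem_Icc.1 hj).2
        exact (abs_exp_neg_mul_sub_sum_poissonPMF_le hlam hlam2 (by positivity) K).trans
          (pow_div_factorial_le_half_pow (by positivity) (by linarith))
    _ = N * h * (1 / 2) ^ K := by rw [sum_const, Nat.card_Icc, nsmul_eq_mul]; push_cast; ring

theorem exp_neg_mul_div_le {lam eps T : ℝ} (hlam : 0 < lam) (heps : 0 < eps)
    (hTlb : log (6 / (eps * lam)) / lam ≤ T) :
    exp (-(lam * T)) / lam ≤ eps / 6 := by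
  have h := (log_le_iff_le_exp (by positivity)).1 ((div_le_iff₀' hlam).1 hTlb)
  rw [div_le_iff₀ (by positivity)] at h
  rw [exp_neg, ← one_div, div_div, div_le_div_iff₀ (by positivity) (by norm_num)]
  linarith

theorem mul_half_pow_le {lam eps T : ℝ} {K : ℕ} (hlam : 0 < lam) (hlam2 : lam ≤ 2)
    (heps : 0 < eps) (hT : 0 < T) (hTlb : log (6 / (eps * lam)) / lam ≤ T) (hK : 6 * T ≤ K) :
    T * (1 / 2) ^ K ≤ eps / 6 := by
  have hlog3 : log (3 / eps) ≤ 2 * T := calc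
    log (3 / eps) ≤ log (6 / (eps * lam)) := by
        refine log_le_log (by positivity) ?_
        rw [div_le_div_iff₀ heps (by positivity)]
        nlinarith
    _ ≤ lam * T := (div_le_iff₀' hlam).1 hTlb
    _ ≤ 2 * T := by gcongr
  have hlog2T : log (2 * T) ≤ 2 * T - 1 := log_le_sub_one_of_pos (by positivity)
  have hpow : 6 * T / eps ≤ 2 ^ K := by
    rw [← exp_log (by positivity : 0 < 6 * T / eps), ← exp_log (by positivity : (0 : ℝ) < 2 ^ K),
      exp_le_exp, log_pow, show 6 * T / eps = 2 * T * (3 / eps) by ring,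
      log_mul (by positivity) (by positivity)]
    nlinarith [log_two_gt_d9]
  rw [div_le_iff₀ heps] at hpow
  rw [one_div_pow, mul_one_div, div_le_div_iff₀ (by positivity) (by norm_num)]
  linarith

theorem inv_lambda_poisson_approx_general (lam eps T : ℝ) (N K : ℕ)
    (hlam : 0 < lam) (hlam2 : lam ≤ 2) (heps : 0 < eps)
    (hT : 0 < T) (hN : 0 < N)
    (hTlb : Real.log (6 / (eps * lam)) / lam ≤ T)
    (hNlb : 6 * T / eps ≤ N)
    (hKlb : max (6 * T) (Real.log (6 * T / eps)) ≤ K) :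
    |1 / lam -
        (T / N) * ∑ j ∈ Finset.Icc 1 N, ∑ k ∈ Finset.range K,
          poissonPMF (j * T / N) k * (1 - lam) ^ k| ≤ eps / 2 := by
  have hN0 : (0 : ℝ) < N := Nat.cast_pos.2 hN
  have hh : 0 < T / N := by positivity
  have hNh : N * (T / N) = T := by field_simp
  have hKT : 6 * T ≤ K := (le_max_left _ _).trans hKlb
  have hmesh : T / N ≤ eps / 6 := by
    rw [div_le_iff₀ heps] at hNlb
    rw [div_le_iff₀ hN0]
    linarith
  have hriemann := abs_inv_sub_riemann_sum_exp_le hlam hh N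
  have hpoisson := abs_riemann_sum_exp_sub_poisson_le (K := K) hlam.le hlam2 hh.le (by rwa [hNh])
  rw [hNh] at hriemann hpoisson
  simp_rw [mul_div_assoc]
  calc _ ≤ _ := abs_sub_le _ (T / N * ∑ j ∈ Icc 1 N, exp (-(lam * (j * (T / N))))) _
    _ ≤ eps / 2 := by
      linarith [exp_neg_mul_div_le hlam heps hTlb, mul_half_pow_le hlam hlam2 heps hT hTlb hKT]

theorem inv_lambda_poisson_approx (lam eps T : ℝ) (N K : ℕ)
    (hlam : 0 < lam) (hlam2 : lam ≤ 2) (heps : 0 < eps)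
    (hT : 0 < T) (hN : 0 < N) (hK : 0 < K)
    (hTlb : Real.log (6 / (eps * lam)) / lam ≤ T)
    (hNlb : 6 * T / eps ≤ N)
    (hKlb : max (6 * T) (Real.log (6 * T / eps)) ≤ K) :
    |1 / lam -
        (T / N) * ∑ j ∈ Finset.Icc 1 N, ∑ k ∈ Finset.range K,
          poissonPMF (j * T / N) k * (1 - lam) ^ k| ≤ eps / 2 :=
  inv_lambda_poisson_approx_general lam eps T N K hlam hlam2 heps hT hN hTlb hNlb hKlb
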